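/- Let C be a polyhedral cone in M and φ : C → ℝ≥0 a monoid homomorphism (from (C,+) to (ℝ≥0,·)) that is continuous on the relative interior of each face of C. Then supp(φ) = {m ∈ C : φ(m) > 0} is a face of C. -/

import Mathlib

def IsPolyhedralCone {N : Type*} [AddCommGroup N] [Module ℝ N] (σ : Set N) : Prop :=
  ∃ S : Finset N, σ = {x | ∃ c : N → ℝ, (∀ v, 0 ≤ c v) ∧ x = ∑ v ∈ S, c v • v}

def dualCone {N : Type*} [AddCommGroup N] [Module ℝ N] (σ : Set N) :
    Set (Module.Dual ℝ N) := {u | ∀ v ∈ σ, 0 ≤ u v}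

def IsFaceOf {N : Type*} [AddCommGroup N] [Module ℝ N] (τ σ : Set N) : Prop :=
  ∃ m ∈ dualCone σ, τ = {v | m v = 0} ∩ σ

/-!
Since `φ ≥ 0` on `C` and `φ (x + y) = φ x * φ y`, the support of `φ` is an additive submonoid
of `C` that contains both summands of each of its elements; over `ℝ` this forces it to be closed
under nonnegative scaling, so it is a face of `C` in the combinatorial sense. Faces of a finitely
generated cone are exposed: finitely generated cones are closed (conic Carathéodory), so Farkas'
lemma gives, for every generator `u` outside the face `F`, a functional that is nonnegative on
`C`, vanishes on `F` and is positive at `u`; the sum of these functionals cuts out `F`.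
-/

open Finset
open scoped Pointwise

namespace PointedCone

variable {M : Type*} [AddCommGroup M] [Module ℝ M]

theorem mem_hull_finset_iff {S : Finset M} {x : M} :
    x ∈ hull ℝ (S : Set M) ↔ ∃ c : M → ℝ, (∀ v, 0 ≤ c v) ∧ x = ∑ v ∈ S, c v • v := by
  constructor
  · intro hx
    obtain ⟨f, -, rfl⟩ := Submodule.mem_span_finset.1 hx
    exact ⟨fun v => f v, fun v => (f v).2, rfl⟩
  · rintro ⟨c, hc, rfl⟩
    exact sum_mem fun v hv => smul_mem _ (hc v) (subset_hull hv)

theorem isPolyhedralCone_iff {C : Set M} :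
    IsPolyhedralCone C ↔ ∃ S : Finset M, C = hull ℝ (S : Set M) :=
  exists_congr fun _ => by
    rw [show {x | _} = _ from Set.ext fun _ => mem_hull_finset_iff.symm]

theorem exists_mem_hull_erase_of_not_linearIndepOn [DecidableEq M] {S : Finset M}
    (hS : ¬LinearIndepOn ℝ id (S : Set M)) {x : M} (hx : x ∈ hull ℝ (S : Set M)) :
    ∃ u ∈ S, x ∈ hull ℝ (S.erase u : Set M) := by
  obtain ⟨c, hc, rfl⟩ := mem_hull_finset_iff.1 hx
  obtain ⟨g, hg, hgpos⟩ : ∃ g : M → ℝ, ∑ v ∈ S, g v • v = 0 ∧ ∃ v ∈ S, 0 < g v := by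
    obtain ⟨g, hg, v, hv, hgv⟩ := not_linearIndepOn_finset_iff.1 hS
    rcases hgv.lt_or_gt with hneg | hpos
    · exact ⟨-g, by simpa [neg_smul] using hg, v, hv, by simpa using hneg⟩
    · exact ⟨g, hg, v, hv, hpos⟩
  -- move along the relation until the first coefficient `c u` hits zero
  obtain ⟨u, hu, hmin⟩ := (S.filter (0 < g ·)).exists_min_image (fun v => c v / g v)
    (by simpa [Finset.Nonempty] using hgpos)
  rw [mem_filter] at hu
  set t := c u / g u
  have hcu : c u - t * g u = 0 := by simp [t, hu.2.ne']
  have hsum : ∑ v ∈ S, c v • v = ∑ v ∈ S.erase u, (c v - t * g v) • v := by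
    rw [sum_erase _ (by rw [hcu, zero_smul])]
    simp only [sub_smul, mul_smul, sum_sub_distrib, ← smul_sum, hg, smul_zero, sub_zero]
  rw [hsum]
  refine ⟨u, hu.1, sum_mem fun v hv => smul_mem _ ?_ (subset_hull hv)⟩
  rcases le_or_gt (g v) 0 with hgv | hgv
  · nlinarith [hc v, div_nonneg (hc u) hu.2.le]
  · have := hmin v (mem_filter.2 ⟨mem_of_mem_erase hv, hgv⟩)
    rw [le_div_iff₀ hgv] at this
    linarith

theorem IsFaceOf.sum_smul_mem_iff {C F : PointedCone ℝ M} (hF : F.IsFaceOf C) {S : Finset M}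
    (hS : ∀ v ∈ S, v ∈ C) {c : M → ℝ} (hc : ∀ v, 0 ≤ c v) :
    ∑ v ∈ S, c v • v ∈ F ↔ ∀ v ∈ S, 0 < c v → v ∈ F := by
  classical
  constructor
  · intro hsum v hv hcv
    rw [← add_sum_erase S _ hv] at hsum
    exact hF.mem_of_smul_add_mem (hS v hv)
      (sum_mem fun w hw => C.smul_mem (hc w) (hS w (mem_of_mem_erase hw))) hcv hsum
  · intro h
    refine sum_mem fun v hv => ?_
    rcases (hc v).eq_or_lt with hcv | hcv
    · rw [← hcv, zero_smul]
      exact F.zero_mem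
    · exact F.smul_mem hcv.le (h v hv hcv)

section Topology

variable [TopologicalSpace M] [IsTopologicalAddGroup M] [ContinuousSMul ℝ M] [T2Space M]

theorem isClosed_hull_of_linearIndepOn {S : Finset M} (hS : LinearIndepOn ℝ id (S : Set M)) :
    IsClosed (hull ℝ (S : Set M) : Set M) := by
  set L := Fintype.linearCombination ℝ (Subtype.val : ↥(S : Set M) → M)
  have hL : Topology.IsClosedEmbedding L := LinearMap.isClosedEmbedding_of_injective
    (LinearMap.ker_eq_bot.2 hS.fintypeLinearCombination_injective)
  have himage : (hull ℝ (S : Set M) : Set M) = L '' Set.univ.pi fun _ => Set.Ici 0 := by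
    ext x
    rw [SetLike.mem_coe, Submodule.mem_span_iff_of_fintype]
    constructor
    · rintro ⟨f, rfl⟩
      exact ⟨fun v => f v, fun v _ => (f v).2, rfl⟩
    · rintro ⟨c, hc, rfl⟩
      exact ⟨fun v => ⟨c v, hc v trivial⟩, rfl⟩
  rw [himage]
  exact hL.isClosedMap _ (isClosed_set_pi fun _ _ => isClosed_Ici)

theorem isClosed_hull_finset (S : Finset M) : IsClosed (hull ℝ (S : Set M) : Set M) := by
  classical
  induction S using Finset.strongInduction with
  | H S ih =>
    by_cases hS : LinearIndepOn ℝ id (S : Set M)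
    · exact isClosed_hull_of_linearIndepOn hS
    have hcover : (hull ℝ (S : Set M) : Set M) = ⋃ u ∈ S, hull ℝ (S.erase u : Set M) := by
      refine subset_antisymm (fun x hx => ?_) (Set.iUnion₂_subset fun u _ => ?_)
      · obtain ⟨u, hu, hxu⟩ := exists_mem_hull_erase_of_not_linearIndepOn hS hx
        exact Set.mem_biUnion hu hxu
      · exact Submodule.span_mono (by simp)
    rw [hcover]
    exact isClosed_biUnion_finset fun u hu => ih _ (erase_ssubset hu)

theorem exists_dual_neg_of_notMem_hull_finset [LocallyConvexSpace ℝ M] {S : Finset M} {x : M}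
    (hx : x ∉ hull ℝ (S : Set M)) :
    ∃ f : Module.Dual ℝ M, (∀ y ∈ hull ℝ (S : Set M), 0 ≤ f y) ∧ f x < 0 := by
  obtain ⟨f, hf, hfx⟩ :=
    ProperCone.hyperplane_separation_point ⟨hull ℝ (S : Set M), isClosed_hull_finset S⟩ hx
  exact ⟨f, hf, hfx⟩

namespace IsFaceOf

variable [LocallyConvexSpace ℝ M] {S : Finset M} {F : PointedCone ℝ M}

theorem exists_dual_separating (hF : F.IsFaceOf (hull ℝ (S : Set M))) {u : M} (hu : u ∈ S)
    (huF : u ∉ F) : ∃ w : Module.Dual ℝ M,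
      (∀ v ∈ S, 0 ≤ w v) ∧ (∀ v ∈ S, v ∈ F → w v = 0) ∧ 0 < w u := by
  classical
  set P := S.filter (· ∈ F)
  have hPF : hull ℝ (P : Set M) ≤ F := Submodule.span_le.2 fun v hv => (mem_filter.1 hv).2
  -- `-u = a - b` with `a ∈ hull S`, `b ∈ hull P ⊆ F` would give `a + u = b ∈ F`, hence `u ∈ F`
  have hnotMem : -u ∉ hull ℝ ((S ∪ -P : Finset M) : Set M) := by
    rw [coe_union, coe_neg, hull, Submodule.span_union, Submodule.mem_sup]
    rintro ⟨a, ha, b, hb, hab⟩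
    rw [Submodule.span_neg_eq_neg, Submodule.mem_neg] at hb
    refine huF (hF.mem_of_add_mem_right ha (subset_hull hu) ?_)
    rw [show a + u = -b by linear_combination (norm := abel_nf) hab]
    exact hPF hb
  obtain ⟨w, hw, hwu⟩ := exists_dual_neg_of_notMem_hull_finset hnotMem
  have hwS : ∀ v ∈ S ∪ -P, 0 ≤ w v := fun v hv => hw v (subset_hull hv)
  refine ⟨w, fun v hv => hwS v (mem_union_left _ hv), fun v hv hvF => ?_, by simpa using hwu⟩
  have hneg : 0 ≤ w (-v) := hwS (-v) (mem_union_right _ (by simpa [P] using ⟨hv, hvF⟩))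
  linarith [hwS v (mem_union_left _ hv), map_neg w v]

theorem exists_dual_eq_zero_iff (hF : F.IsFaceOf (hull ℝ (S : Set M))) :
    ∃ w : Module.Dual ℝ M, ∀ v ∈ S, 0 ≤ w v ∧ (w v = 0 ↔ v ∈ F) := by
  classical
  choose! W hWnn hWF hWpos using fun u (hu : u ∈ S.filter (· ∉ F)) =>
    hF.exists_dual_separating (mem_filter.1 hu).1 (mem_filter.1 hu).2
  refine ⟨∑ u ∈ S.filter (· ∉ F), W u, fun v hv => ?_⟩
  have hterm : ∀ u ∈ S.filter (· ∉ F), 0 ≤ W u v := fun u hu => hWnn u hu v hv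
  simp only [LinearMap.sum_apply]
  refine ⟨sum_nonneg hterm, fun hzero => ?_, fun hvF => sum_eq_zero fun u hu => hWF u hu v hv hvF⟩
  by_contra hvF
  have hmem : v ∈ S.filter (· ∉ F) := mem_filter.2 ⟨hv, hvF⟩
  linarith [single_le_sum hterm hmem, hWpos v hmem]

theorem exposed_of_hull_finset (hF : F.IsFaceOf (hull ℝ (S : Set M))) :
    _root_.IsFaceOf (F : Set M) (hull ℝ (S : Set M)) := by
  obtain ⟨w, hw⟩ := hF.exists_dual_eq_zero_iff
  have hterm : ∀ c : M → ℝ, (∀ v, 0 ≤ c v) → ∀ v ∈ S, 0 ≤ w (c v • v) := fun c hc v hv => by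
    rw [map_smul, smul_eq_mul]
    exact mul_nonneg (hc v) (hw v hv).1
  have hkey : ∀ x ∈ hull ℝ (S : Set M), x ∈ F ↔ w x = 0 := by
    intro x hx
    obtain ⟨c, hc, rfl⟩ := mem_hull_finset_iff.1 hx
    rw [hF.sum_smul_mem_iff (fun v hv => subset_hull hv) hc, map_sum,
      sum_eq_zero_iff_of_nonneg (hterm c hc)]
    refine forall₂_congr fun v hv => ?_
    rw [map_smul, smul_eq_mul, mul_eq_zero, (hw v hv).2]
    rcases (hc v).eq_or_lt with hcv | hcv
    · simp [← hcv]
    · simp [hcv, hcv.ne']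
  refine ⟨w, fun x hx => ?_, Set.ext fun x => ?_⟩
  · obtain ⟨c, hc, rfl⟩ := mem_hull_finset_iff.1 hx
    rw [map_sum]
    exact sum_nonneg (hterm c hc)
  · exact ⟨fun hxF => ⟨(hkey x (hF.le hxF)).1 hxF, hF.le hxF⟩, fun ⟨hwx, hx⟩ => (hkey x hx).2 hwx⟩

end IsFaceOf

end Topology

def faceOfAddSubmonoid (C : PointedCone ℝ M) (F : AddSubmonoid M) (hle : ∀ x ∈ F, x ∈ C)
    (hsplit : ∀ x ∈ C, ∀ y ∈ C, x + y ∈ F → x ∈ F) : PointedCone ℝ M where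
  toAddSubmonoid := F
  smul_mem' := fun ⟨t, ht⟩ x hx => by
    have hxC := hle x hx
    -- `t • x` is a summand of `⌈t⌉₊ • x ∈ F`
    refine hsplit _ (C.smul_mem ht hxC) ((⌈t⌉₊ - t) • x)
      (C.smul_mem (sub_nonneg.2 (Nat.le_ceil t)) hxC) ?_
    rw [Nonneg.mk_smul, ← add_smul, add_sub_cancel, Nat.cast_smul_eq_nsmul]
    exact F.nsmul_mem hx _

theorem isFaceOf_faceOfAddSubmonoid (C : PointedCone ℝ M) (F : AddSubmonoid M)
    (hle : ∀ x ∈ F, x ∈ C) (hsplit : ∀ x ∈ C, ∀ y ∈ C, x + y ∈ F → x ∈ F) :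
    (faceOfAddSubmonoid C F hle hsplit).IsFaceOf C :=
  IsFaceOf.of_mem_of_add_mem_left hle fun hx hy hxy => hsplit _ hx _ hy hxy

def posSubmonoid (C : PointedCone ℝ M) (φ : M → ℝ) (h0 : φ 0 = 1)
    (hmul : ∀ m ∈ C, ∀ m' ∈ C, φ (m + m') = φ m * φ m') : AddSubmonoid M where
  carrier := {m | m ∈ C ∧ 0 < φ m}
  zero_mem' := ⟨C.zero_mem, h0 ▸ one_pos⟩
  add_mem' := fun ⟨ha, hφa⟩ ⟨hb, hφb⟩ =>
    ⟨C.add_mem ha hb, (hmul _ ha _ hb).symm ▸ mul_pos hφa hφb⟩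

end PointedCone

theorem support_is_face_general {M : Type*} [NormedAddCommGroup M] [NormedSpace ℝ M]
    (C : Set M) (hC : IsPolyhedralCone C) (φ : M → ℝ)
    (hnn : ∀ m ∈ C, 0 ≤ φ m)
    (h0 : φ 0 = 1)
    (hmul : ∀ m ∈ C, ∀ m' ∈ C, φ (m + m') = φ m * φ m') :
    IsFaceOf {m ∈ C | 0 < φ m} C := by
  obtain ⟨S, rfl⟩ := PointedCone.isPolyhedralCone_iff.1 hC
  set C := PointedCone.hull ℝ (S : Set M)
  set F := PointedCone.posSubmonoid C φ h0 hmul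
  have hsplit : ∀ x ∈ C, ∀ y ∈ C, x + y ∈ F → x ∈ F :=
    fun x hx y hy hxy => ⟨hx, pos_of_mul_pos_left (hmul x hx y hy ▸ hxy.2) (hnn y hy)⟩
  exact (PointedCone.isFaceOf_faceOfAddSubmonoid C F (fun _ hx => hx.1) hsplit)
    |>.exposed_of_hull_finset

/-- If `C` is a polyhedral cone and `φ : C → ℝ≥0` is a monoid homomorphism
(`φ(0) = 1`, `φ(m + m') = φ(m)·φ(m')`, `φ ≥ 0` on `C`) that is continuous on the
relative interior of each face of `C`, then `supp(φ) = {m ∈ C : φ(m) > 0}` is a face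
of `C`. -/
theorem support_is_face {M : Type*} [NormedAddCommGroup M] [NormedSpace ℝ M]
    [FiniteDimensional ℝ M] (C : Set M) (hC : IsPolyhedralCone C) (φ : M → ℝ)
    (hnn : ∀ m ∈ C, 0 ≤ φ m)
    (h0 : φ 0 = 1)
    (hmul : ∀ m ∈ C, ∀ m' ∈ C, φ (m + m') = φ m * φ m')
    (hcont : ∀ F, IsFaceOf F C → ContinuousOn φ (intrinsicInterior ℝ F)) :
    IsFaceOf {m ∈ C | 0 < φ m} C :=
  support_is_face_general C hC φ hnn h0 hmul
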